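/- arXiv:2201.05332 — 4 statements merged into one kernel-verified Lean document; each statement's English description precedes it below -/
import Mathlib

section
/- The set function C ↦ −q(C) is submodular: for all A ⊆ B ⊆ V and v ∈ V \ B, q(A) − q(A ∪ {v}) ≥ q(B) − q(B ∪ {v}). -/
open SimpleGraph Set

variable {V : Type*}

/-- The spanning subgraph `G⟨C⟩` of `G` whose edges are those incident with `C`. -/
def spanSub (G : SimpleGraph V) (C : Set V) : SimpleGraph V where
  Adj a b := G.Adj a b ∧ (a ∈ C ∨ b ∈ C)
  symm := ⟨fun a b h => ⟨h.1.symm, h.2.symm⟩⟩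
  loopless := ⟨fun a h => G.loopless.irrefl a h.1⟩

/-- `p(C)`: number of connected components of the induced subgraph `G[C]`. -/
noncomputable def pcomp (G : SimpleGraph V) (C : Set V) : ℕ :=
  Nat.card (G.induce C).ConnectedComponent

/-- `q(C)`: number of connected components of the spanning subgraph `G⟨C⟩`. -/
noncomputable def qcomp (G : SimpleGraph V) (C : Set V) : ℕ :=
  Nat.card (spanSub G C).ConnectedComponent

/-- The potential `f1(C) = p(C) + q(C)`. -/
noncomputable def f1 (G : SimpleGraph V) (C : Set V) : ℕ :=
  pcomp G C + qcomp G C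

/-- `C` is a dominating set of `G`. -/
def IsDomSet (G : SimpleGraph V) (C : Set V) : Prop :=
  ∀ v ∉ C, ∃ u ∈ C, G.Adj v u

/-- `C` is a connected dominating set of `G`. -/
def IsCDS (G : SimpleGraph V) (C : Set V) : Prop :=
  IsDomSet G C ∧ (G.induce C).Connected

private lemma span_mono {G : SimpleGraph V} {C C' : Set V} (h : C ⊆ C') :
    spanSub G C ≤ spanSub G C' := by
  intro a b hab
  exact ⟨hab.1, hab.2.imp (fun hx => h hx) (fun hx => h hx)⟩

private lemma reach_insert {G : SimpleGraph V} {C : Set V} {v x y : V}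
    (h : (spanSub G (insert v C)).Reachable x y) :
    (spanSub G C).Reachable x y ∨
      ((∃ p, (p = v ∨ G.Adj v p) ∧ (spanSub G C).Reachable x p) ∧
       (∃ p, (p = v ∨ G.Adj v p) ∧ (spanSub G C).Reachable y p)) := by
  obtain ⟨w⟩ := h
  induction w with
  | nil => exact Or.inl (Reachable.refl _)
  | @cons a b c h p ih =>
    obtain ⟨hG, hmem⟩ := h
    have step : (spanSub G C).Reachable a b ∨
        ((a = v ∨ G.Adj v a) ∧ (b = v ∨ G.Adj v b)) := by
      rcases hmem with hx | hx
      · rcases hx with hx | hx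
        · subst hx; exact Or.inr ⟨Or.inl rfl, Or.inr hG⟩
        · exact Or.inl ⟨SimpleGraph.Adj.toWalk ⟨hG, Or.inl hx⟩⟩
      · rcases hx with hx | hx
        · subst hx; exact Or.inr ⟨Or.inr hG.symm, Or.inl rfl⟩
        · exact Or.inl ⟨SimpleGraph.Adj.toWalk ⟨hG, Or.inr hx⟩⟩
    rcases step with hab | ⟨ha, hb⟩
    · rcases ih with hbc | ⟨⟨p, hp, hbp⟩, hy⟩
      · exact Or.inl (hab.trans hbc)
      · exact Or.inr ⟨⟨p, hp, hab.trans hbp⟩, hy⟩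
    · refine Or.inr ⟨⟨a, ha, Reachable.refl _⟩, ?_⟩
      rcases ih with hbc | ⟨_, hy⟩
      · exact ⟨b, hb, hbc.symm⟩
      · exact hy

private lemma qcomp_insert [Fintype V] (G : SimpleGraph V) (C : Set V) (v : V) :
    qcomp G (insert v C) +
      ((spanSub G C).connectedComponentMk '' {p | p = v ∨ G.Adj v p}).ncard
      = qcomp G C + 1 := by
  classical
  set S : Set (spanSub G C).ConnectedComponent :=
    (spanSub G C).connectedComponentMk '' {p | p = v ∨ G.Adj v p} with hS
  have hle : spanSub G C ≤ spanSub G (insert v C) := span_mono (Set.subset_insert v C)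
  set φ : (spanSub G C).ConnectedComponent → (spanSub G (insert v C)).ConnectedComponent :=
    ConnectedComponent.map (SimpleGraph.Hom.ofLE hle) with hφ
  have hφmk : ∀ x : V, φ ((spanSub G C).connectedComponentMk x)
      = (spanSub G (insert v C)).connectedComponentMk x := fun x => rfl
  have memS : ∀ x : V, (∃ p, (p = v ∨ G.Adj v p) ∧ (spanSub G C).Reachable x p) →
      (spanSub G C).connectedComponentMk x ∈ S := by
    rintro x ⟨p, hp, hxp⟩
    exact ⟨p, hp, (ConnectedComponent.sound hxp).symm⟩
  set f : Option ↥Sᶜ → (spanSub G (insert v C)).ConnectedComponent :=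
    fun o => o.elim ((spanSub G (insert v C)).connectedComponentMk v) (fun c => φ c.1) with hf
  have hbij : Function.Bijective f := by
    constructor
    · rintro (_ | ⟨c, hc⟩) (_ | ⟨d, hd⟩) h
      · rfl
      · exfalso
        obtain ⟨x, rfl⟩ := d.exists_rep
        have hr : (spanSub G (insert v C)).Reachable v x :=
          ConnectedComponent.exact (h.trans (hφmk x))
        rcases reach_insert hr with hr' | ⟨_, hx⟩
        · exact hd (memS x ⟨v, Or.inl rfl, hr'.symm⟩)
        · exact hd (memS x hx)
      · exfalso
        obtain ⟨x, rfl⟩ := c.exists_rep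
        have hr : (spanSub G (insert v C)).Reachable v x :=
          ConnectedComponent.exact (h.symm.trans (hφmk x))
        rcases reach_insert hr with hr' | ⟨_, hx⟩
        · exact hc (memS x ⟨v, Or.inl rfl, hr'.symm⟩)
        · exact hc (memS x hx)
      · obtain ⟨x, hx⟩ := c.exists_rep
        obtain ⟨y, hy⟩ := d.exists_rep
        have hr : (spanSub G (insert v C)).Reachable x y := by
          apply ConnectedComponent.exact
          have h' : φ c = φ d := h
          rw [← hx, ← hy] at h'
          exact h'
        rcases reach_insert hr with hr' | ⟨hx', hy'⟩
        · simp only [Option.some.injEq, Subtype.mk.injEq]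
          rw [← hx, ← hy]
          exact ConnectedComponent.sound hr'
        · exfalso
          apply hc
          rw [← hx]
          exact memS x hx'
    · intro d
      obtain ⟨y, rfl⟩ := d.exists_rep
      by_cases hy : (spanSub G C).connectedComponentMk y ∈ S
      · obtain ⟨p, hp, hpy⟩ := hy
        have h1 : (spanSub G C).Reachable p y := ConnectedComponent.exact hpy
        have h2 : (spanSub G (insert v C)).Reachable p y := h1.mono hle
        have h3 : (spanSub G (insert v C)).Reachable v p := by
          rcases hp with rfl | hp
          · exact Reachable.refl _
          · exact ⟨SimpleGraph.Adj.toWalk ⟨hp, Or.inl (Set.mem_insert v C)⟩⟩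
        exact ⟨none, ConnectedComponent.sound (h3.trans h2)⟩
      · exact ⟨some ⟨_, hy⟩, hφmk y⟩
  have hcard : Nat.card (spanSub G (insert v C)).ConnectedComponent = Nat.card (Option ↥Sᶜ) :=
    (Nat.card_eq_of_bijective f hbij).symm
  have h1 : Nat.card (Option ↥Sᶜ) = Sᶜ.ncard + 1 := by
    rw [Finite.card_option, Nat.card_coe_set_eq]
  have h2 : S.ncard + Sᶜ.ncard = Nat.card (spanSub G C).ConnectedComponent :=
    Set.ncard_add_ncard_compl S
  unfold qcomp
  omega

private lemma m_antitone [Fintype V] (G : SimpleGraph V) {A B : Set V} (hAB : A ⊆ B) (v : V) :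
    ((spanSub G B).connectedComponentMk '' {p | p = v ∨ G.Adj v p}).ncard ≤
      ((spanSub G A).connectedComponentMk '' {p | p = v ∨ G.Adj v p}).ncard := by
  classical
  have hle : spanSub G A ≤ spanSub G B := span_mono hAB
  have himg : (spanSub G B).connectedComponentMk '' {p | p = v ∨ G.Adj v p}
      = ConnectedComponent.map (SimpleGraph.Hom.ofLE hle) ''
        ((spanSub G A).connectedComponentMk '' {p | p = v ∨ G.Adj v p}) := by
    rw [Set.image_image]
    rfl
  rw [himg]
  exact Set.ncard_image_le (Set.toFinite _)

private lemma m_pos [Fintype V] (G : SimpleGraph V) (C : Set V) (v : V) :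
    1 ≤ ((spanSub G C).connectedComponentMk '' {p | p = v ∨ G.Adj v p}).ncard := by
  have : ((spanSub G C).connectedComponentMk '' {p | p = v ∨ G.Adj v p}).Nonempty :=
    ⟨_, ⟨v, Or.inl rfl, rfl⟩⟩
  exact (Set.ncard_pos (Set.toFinite _)).mpr this

theorem neg_q_submodular [Fintype V] (G : SimpleGraph V) (A B : Set V) (hAB : A ⊆ B)
    (v : V) (hv : v ∉ B) :
    (qcomp G B : ℤ) - qcomp G (insert v B) ≤ (qcomp G A : ℤ) - qcomp G (insert v A) := by
  have hA := qcomp_insert G A v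
  have hB := qcomp_insert G B v
  have hm := m_antitone G hAB v
  have hpA := m_pos G A v
  have hpB := m_pos G B v
  omega
end

section
/- For a connected graph G, any C ⊆ V, any set D ⊆ V with G[D] connected, and any vertex v such that G[D ∪ {v}] is connected, we have p(C ∪ D) − p(C ∪ D ∪ {v}) ≤ (p(C) − p(C ∪ {v})) + 1, where p denotes the number of connected components of the induced subgraph. -/
open SimpleGraph Set

variable {V : Type*}

section Aux

variable (G : SimpleGraph V)

/-- Inclusion hom between induced subgraphs. -/
def incHom {A B : Set V} (h : A ⊆ B) : G.induce A →g G.induce B :=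
  ⟨fun x => ⟨x.1, h x.2⟩, fun hadj => hadj⟩

lemma reach_mono {A B : Set V} (h : A ⊆ B) {x y : ↥A}
    (hr : (G.induce A).Reachable x y) :
    (G.induce B).Reachable ⟨x.1, h x.2⟩ ⟨y.1, h y.2⟩ :=
  hr.map (incHom G h)

lemma walk_split {S : Set V} {v : V} (hv : v ∉ S) :
    ∀ {a b : ↥(insert v S)} (_ : (G.induce (insert v S)).Walk a b) (hb : b.1 ∈ S),
      (a.1 = v → ∃ y : ↥S, G.Adj v y.1 ∧ (G.induce S).Reachable y ⟨b.1, hb⟩)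
      ∧ (∀ ha : a.1 ∈ S,
          (G.induce S).Reachable ⟨a.1, ha⟩ ⟨b.1, hb⟩ ∨
          ∃ y : ↥S, G.Adj v y.1 ∧ (G.induce S).Reachable y ⟨b.1, hb⟩) := by
  intro a b p
  induction p with
  | nil =>
    intro hb
    constructor
    · intro hav; exact absurd (hav ▸ hb) hv
    · intro ha; exact Or.inl (by rfl)
  | @cons a c b h q ih =>
    intro hb
    have hadj : G.Adj a.1 c.1 := h
    by_cases hc : c.1 ∈ S
    · have IH := (ih hb).2 hc
      constructor
      · intro hav
        rcases IH with hr | ⟨y, hy1, hy2⟩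
        · exact ⟨⟨c.1, hc⟩, by rwa [hav] at hadj, hr⟩
        · exact ⟨y, hy1, hy2⟩
      · intro ha
        rcases IH with hr | ⟨y, hy1, hy2⟩
        · exact Or.inl ((Adj.reachable
            (by exact hadj : (G.induce S).Adj ⟨a.1, ha⟩ ⟨c.1, hc⟩)).trans hr)
        · exact Or.inr ⟨y, hy1, hy2⟩
    · have hcv : c.1 = v := by
        rcases Set.mem_insert_iff.mp c.2 with h' | h'
        · exact h'
        · exact absurd h' hc
      have IH := (ih hb).1 hcv
      constructor
      · intro hav
        rw [hav, hcv] at hadj; exact (G.loopless.irrefl v hadj).elim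
      · intro _; exact Or.inr IH

lemma insert_pcomp_le [Fintype V] (C : Set V) (v : V) :
    pcomp G (insert v C) ≤ pcomp G C + 1 := by
  classical
  let f : (G.induce C).ConnectedComponent ⊕ Unit →
      (G.induce (insert v C)).ConnectedComponent :=
    fun t => match t with
    | .inl Y => Y.map (incHom G (subset_insert v C))
    | .inr _ => (G.induce (insert v C)).connectedComponentMk ⟨v, mem_insert v C⟩
  have hf : Function.Surjective f := by
    intro Z
    obtain ⟨z, hz⟩ := Z.exists_rep
    rcases Set.mem_insert_iff.mp z.2 with h' | h'
    · refine ⟨.inr (), ?_⟩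
      rw [← hz]
      exact congrArg _ (Subtype.ext h'.symm)
    · refine ⟨.inl ((G.induce C).connectedComponentMk ⟨z.1, h'⟩), ?_⟩
      rw [← hz]; rfl
  have hcard := Nat.card_le_card_of_surjective f hf
  rw [Nat.card_sum] at hcard
  simpa [pcomp] using hcard

set_option maxHeartbeats 1000000 in
lemma key_ineq [Fintype V] (C D : Set V) (hD : (G.induce D).Connected)
    {v : V} (hvC : v ∉ C) (hvD : v ∉ D) :
    pcomp G (C ∪ D) + pcomp G (insert v C) ≤
      pcomp G C + pcomp G (insert v (C ∪ D)) + 1 := by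
  classical
  obtain ⟨d0⟩ := hD.nonempty
  set S := C ∪ D with hS
  have hvS : v ∉ S := by simp [hS, hvC, hvD]
  have hvS' : v ∈ insert v S := mem_insert v S
  have hvC' : v ∈ insert v C := mem_insert v C
  let mkC : ↥C → (G.induce C).ConnectedComponent := (G.induce C).connectedComponentMk
  let mkS : ↥S → (G.induce S).ConnectedComponent := (G.induce S).connectedComponentMk
  let mkS' : ↥(insert v S) → (G.induce (insert v S)).ConnectedComponent :=
    (G.induce (insert v S)).connectedComponentMk
  let mkC' : ↥(insert v C) → (G.induce (insert v C)).ConnectedComponent :=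
    (G.induce (insert v C)).connectedComponentMk
  let φ := ConnectedComponent.map (incHom G (subset_union_left : C ⊆ S))
  let β := ConnectedComponent.map (incHom G (subset_insert v C))
  let α := ConnectedComponent.map (incHom G (subset_insert v S))
  let AdjC : (G.induce C).ConnectedComponent → Prop :=
    fun Y => ∃ y : ↥C, G.Adj v y.1 ∧ mkC y = Y
  let AdjS : (G.induce S).ConnectedComponent → Prop :=
    fun X => ∃ y : ↥S, G.Adj v y.1 ∧ mkS y = X
  have fact1 : ∀ (x : ↥S),
      (G.induce (insert v S)).Reachable ⟨v, hvS'⟩ ⟨x.1, subset_insert v S x.2⟩ →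
      AdjS (mkS x) := by
    intro x hr
    obtain ⟨p⟩ := hr
    obtain ⟨y, hy1, hy2⟩ := (walk_split G hvS p x.2).1 rfl
    exact ⟨y, hy1, ConnectedComponent.sound hy2⟩
  have fact2 : ∀ (w x : ↥S),
      (G.induce (insert v S)).Reachable ⟨w.1, subset_insert v S w.2⟩
        ⟨x.1, subset_insert v S x.2⟩ →
      ¬ AdjS (mkS x) → (G.induce S).Reachable w x := by
    intro w x hr hnadj
    obtain ⟨p⟩ := hr
    rcases (walk_split G hvS p x.2).2 w.2 with h' | ⟨y, hy1, hy2⟩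
    · exact h'
    · exact absurd ⟨y, hy1, ConnectedComponent.sound hy2⟩ hnadj
  let f : (G.induce C).ConnectedComponent ⊕
      ((G.induce (insert v S)).ConnectedComponent ⊕ Unit) →
      (G.induce S).ConnectedComponent ⊕ (G.induce (insert v C)).ConnectedComponent :=
    fun t => match t with
    | .inl Y => if AdjC Y then .inl (φ Y) else .inr (β Y)
    | .inr (.inl W) =>
        if h : W = mkS' ⟨v, hvS'⟩ then .inr (mkC' ⟨v, hvC'⟩)
        else .inl (mkS ⟨(Classical.choose W.exists_rep).1, by
          rcases Set.mem_insert_iff.mp (Classical.choose W.exists_rep).2 with h' | h'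
          · exact absurd (by
              rw [← Classical.choose_spec W.exists_rep]
              exact congrArg mkS' (Subtype.ext h')) h
          · exact h'⟩)
    | .inr (.inr _) => .inl (mkS ⟨d0.1, Or.inr d0.2⟩)
  have hf : Function.Surjective f := by
    rintro (X | Z)
    · by_cases hX : AdjS X
      · obtain ⟨y, hy1, rfl⟩ := hX
        rcases (show y.1 ∈ C ∪ D from y.2) with hyC | hyD
        · refine ⟨.inl (mkC ⟨y.1, hyC⟩), ?_⟩
          have hcond : AdjC (mkC ⟨y.1, hyC⟩) := ⟨⟨y.1, hyC⟩, hy1, rfl⟩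
          simp only [f, if_pos hcond]
          rfl
        · refine ⟨.inr (.inr ()), ?_⟩
          simp only [f]
          congr 1
          exact ConnectedComponent.sound
            (reach_mono G (subset_union_right : D ⊆ S) (hD.preconnected d0 ⟨y.1, hyD⟩))
      · obtain ⟨x, rfl⟩ := X.exists_rep
        have hαX : α (mkS x) ≠ mkS' ⟨v, hvS'⟩ := by
          intro hEq
          have h1 : mkS' ⟨x.1, subset_insert v S x.2⟩ = mkS' ⟨v, hvS'⟩ := hEq
          have hr := ConnectedComponent.exact h1
          exact hX (fact1 x hr.symm)
        refine ⟨.inr (.inl (α (mkS x))), ?_⟩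
        simp only [f, dif_neg hαX]
        congr 1
        have hw2 : mkS' (Classical.choose (α (mkS x)).exists_rep) = α (mkS x) :=
          Classical.choose_spec (α (mkS x)).exists_rep
        have hwS : (Classical.choose (α (mkS x)).exists_rep).1 ∈ S := by
          rcases Set.mem_insert_iff.mp (Classical.choose (α (mkS x)).exists_rep).2 with h' | h'
          · exact absurd (by
              rw [← hw2]
              exact congrArg mkS' (Subtype.ext h')) hαX
          · exact h'
        have hr : (G.induce (insert v S)).Reachable (Classical.choose (α (mkS x)).exists_rep)
            ⟨x.1, subset_insert v S x.2⟩ :=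
          ConnectedComponent.exact hw2
        have hreach := fact2 ⟨(Classical.choose (α (mkS x)).exists_rep).1, hwS⟩ x hr hX
        exact ConnectedComponent.sound hreach
    · by_cases hZ : Z = mkC' ⟨v, hvC'⟩
      · refine ⟨.inr (.inl (mkS' ⟨v, hvS'⟩)), ?_⟩
        simp only [f, dif_pos]
        rw [hZ]
      · obtain ⟨z, rfl⟩ := Z.exists_rep
        have hzC : z.1 ∈ C := by
          rcases Set.mem_insert_iff.mp z.2 with h' | h'
          · exact absurd (congrArg mkC' (Subtype.ext h')) hZ
          · exact h'
        have hcond : ¬ AdjC (mkC ⟨z.1, hzC⟩) := by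
          rintro ⟨y, hy1, hy2⟩
          apply hZ
          have h1 : (G.induce (insert v C)).Reachable ⟨v, hvC'⟩
              ⟨y.1, subset_insert v C y.2⟩ := Adj.reachable (by exact hy1)
          have h2 : (G.induce (insert v C)).Reachable ⟨y.1, subset_insert v C y.2⟩
              ⟨z.1, subset_insert v C hzC⟩ :=
            reach_mono G (subset_insert v C) (ConnectedComponent.exact hy2)
          exact (ConnectedComponent.sound (h1.trans h2)).symm
        refine ⟨.inl (mkC ⟨z.1, hzC⟩), ?_⟩
        simp only [f, if_neg hcond]
        rfl
  have hcard := Nat.card_le_card_of_surjective f hf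
  rw [Nat.card_sum, Nat.card_sum, Nat.card_sum] at hcard
  simp only [Nat.card_unique] at hcard
  simpa [pcomp, Nat.add_assoc] using hcard

end Aux

theorem p_decrease_almost_submodular [Fintype V] (G : SimpleGraph V) (hG : G.Connected)
    (C D : Set V) (hD : (G.induce D).Connected)
    (v : V) (hDv : (G.induce (insert v D)).Connected) :
    (pcomp G (C ∪ D) : ℤ) - pcomp G (insert v (C ∪ D)) ≤
      ((pcomp G C : ℤ) - pcomp G (insert v C)) + 1 := by
  classical
  by_cases hvC : v ∈ C
  · rw [Set.insert_eq_self.mpr hvC, Set.insert_eq_self.mpr (Set.mem_union_left D hvC)]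
    omega
  · by_cases hvD : v ∈ D
    · rw [Set.insert_eq_self.mpr (Set.mem_union_right C hvD)]
      have h := insert_pcomp_le G C v
      omega
    · have h := key_ineq G C D hD hvC hvD
      omega
end

section
/- For any vertex subset C of a connected graph G with f1(C) > 2, and minimum CDS C* of size m, there exists a vertex v* ∈ C* with f1(C) − f1(C ∪ {v*}) + 1 ≥ (f1(C) − 2)/m. -/
open SimpleGraph Set

variable {V : Type*}

/-- Graph whose edges are those of `G` with both ends in `C`. -/
private def bothG (G : SimpleGraph V) (C : Set V) : SimpleGraph V where
  Adj a b := G.Adj a b ∧ a ∈ C ∧ b ∈ C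
  symm := ⟨fun a b h => ⟨h.1.symm, h.2.2, h.2.1⟩⟩
  loopless := ⟨fun a h => G.loopless.irrefl a h.1⟩

/-- Star graph: edges from `v` to members of `S`. -/
private def starG (v : V) (S : Set V) : SimpleGraph V where
  Adj a b := (a = v ∧ b ∈ S ∧ b ≠ v) ∨ (b = v ∧ a ∈ S ∧ a ≠ v)
  symm := ⟨fun a b h => by tauto⟩
  loopless := ⟨fun a h => by rcases h with ⟨rfl, _, h⟩|⟨rfl, _, h⟩ <;> exact h rfl⟩

private noncomputable def cnt (H : SimpleGraph V) : ℕ := Nat.card H.ConnectedComponent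

private def touchSet (H : SimpleGraph V) (v : V) (S : Set V) : Set H.ConnectedComponent :=
  {K | ∃ u ∈ insert v S, H.connectedComponentMk u = K}

private lemma reach_sup_star {H : SimpleGraph V} {v : V} {S : Set V} {a b : V} :
    (H ⊔ starG v S).Reachable a b ↔ H.Reachable a b ∨
      ((∃ u ∈ insert v S, H.Reachable a u) ∧ (∃ u ∈ insert v S, H.Reachable b u)) := by
  constructor
  · rintro ⟨w⟩
    induction w with
    | nil => exact Or.inl (Reachable.refl _)
    | @cons x y z h p ih =>
      rcases h with h | h
      · rcases ih with h' | ⟨h1, h2⟩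
        · exact Or.inl (h.reachable.trans h')
        · exact Or.inr ⟨h1.imp fun u hu => ⟨hu.1, h.reachable.trans hu.2⟩, h2⟩
      · have hx : x ∈ insert v S := by
          rcases h with ⟨rfl, _, _⟩ | ⟨_, hx, _⟩
          · exact mem_insert _ _
          · exact mem_insert_of_mem _ hx
        have hy : y ∈ insert v S := by
          rcases h with ⟨_, hy, _⟩ | ⟨rfl, _, _⟩
          · exact mem_insert_of_mem _ hy
          · exact mem_insert _ _
        refine Or.inr ⟨⟨x, hx, Reachable.refl _⟩, ?_⟩
        rcases ih with h' | ⟨_, h2⟩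
        · exact ⟨y, hy, h'.symm⟩
        · exact h2
  · have key : ∀ u ∈ insert v S, (H ⊔ starG v S).Reachable u v := by
      intro u hu
      rcases eq_or_ne u v with rfl | hne
      · exact Reachable.refl _
      · rcases hu with rfl | hu
        · exact Reachable.refl _
        · exact (Adj.reachable (Or.inr ⟨rfl, hu, hne⟩ : (starG v S).Adj u v)).mono le_sup_right
    rintro (h | ⟨⟨u1, hu1, h1⟩, ⟨u2, hu2, h2⟩⟩)
    · exact h.mono le_sup_left
    · exact ((h1.mono le_sup_left).trans (key u1 hu1)).trans
        (((h2.mono le_sup_left).trans (key u2 hu2)).symm)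

private lemma touch_nonempty {H : SimpleGraph V} {v : V} {S : Set V} :
    H.connectedComponentMk v ∈ touchSet H v S :=
  ⟨v, mem_insert _ _, rfl⟩

private lemma star_count [Fintype V] (H : SimpleGraph V) (v : V) (S : Set V) :
    cnt (H ⊔ starG v S) + (touchSet H v S).ncard = cnt H + 1 := by
  classical
  set H' := H ⊔ starG v S with hH'
  set T := touchSet H v S with hT
  let f : H.ConnectedComponent → H'.ConnectedComponent :=
    ConnectedComponent.map (Hom.ofLE le_sup_left)
  have f_mk : ∀ a : V, f (H.connectedComponentMk a) = H'.connectedComponentMk a :=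
    fun a => rfl
  have hom_apply : ∀ a : V, (Hom.ofLE (le_sup_left : H ≤ H')) a = a :=
    fun _ => rfl
  -- the bijection
  have hbij : Function.Bijective (Sum.elim (fun K : {K : H.ConnectedComponent // K ∉ T} => f K.1)
      (fun _ : Unit => H'.connectedComponentMk v)) := by
    constructor
    · rintro (⟨K1, hK1⟩ | u1) (⟨K2, hK2⟩ | u2) h
      · obtain ⟨a, rfl⟩ := K1.exists_rep
        obtain ⟨b, rfl⟩ := K2.exists_rep
        simp only [Sum.elim_inl, f_mk] at h
        have hr := reach_sup_star.mp (ConnectedComponent.exact h)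
        simp only [hom_apply] at hr
        rcases hr with hr | ⟨⟨u, hu, hru⟩, _⟩
        · simp only [Sum.inl.injEq, Subtype.mk.injEq]
          exact Subtype.ext (ConnectedComponent.sound hr)
        · exact absurd ⟨u, hu, (ConnectedComponent.sound hru).symm⟩ hK1
      · obtain ⟨a, rfl⟩ := K1.exists_rep
        simp only [Sum.elim_inl, Sum.elim_inr, f_mk] at h
        have hr := reach_sup_star.mp (ConnectedComponent.exact h)
        simp only [hom_apply] at hr
        rcases hr with hr | ⟨⟨u, hu, hru⟩, _⟩
        · exact absurd ⟨v, mem_insert _ _, (ConnectedComponent.sound hr).symm⟩ hK1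
        · exact absurd ⟨u, hu, (ConnectedComponent.sound hru).symm⟩ hK1
      · obtain ⟨a, rfl⟩ := K2.exists_rep
        simp only [Sum.elim_inl, Sum.elim_inr, f_mk] at h
        have hr := reach_sup_star.mp (ConnectedComponent.exact h.symm)
        simp only [hom_apply] at hr
        rcases hr with hr | ⟨⟨u, hu, hru⟩, _⟩
        · exact absurd ⟨v, mem_insert _ _, (ConnectedComponent.sound hr).symm⟩ hK2
        · exact absurd ⟨u, hu, (ConnectedComponent.sound hru).symm⟩ hK2
      · rfl
    · intro K'
      obtain ⟨a, rfl⟩ := K'.exists_rep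
      by_cases ha : H.connectedComponentMk a ∈ T
      · refine ⟨Sum.inr (), ?_⟩
        obtain ⟨u, hu, hru⟩ := ha
        have : H'.Reachable v a := by
          refine reach_sup_star.mpr (Or.inr ⟨⟨v, mem_insert _ _, Reachable.refl _⟩,
            ⟨u, hu, (ConnectedComponent.exact hru).symm⟩⟩)
        exact ConnectedComponent.sound this
      · exact ⟨Sum.inl ⟨_, ha⟩, rfl⟩
  have hcard := Nat.card_congr (Equiv.ofBijective _ hbij)
  have h1 : Nat.card ({K : H.ConnectedComponent // K ∉ T} ⊕ Unit)
      = Nat.card {K : H.ConnectedComponent // K ∉ T} + 1 := by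
    simp [Nat.card_sum]
  have h2 : Nat.card {K : H.ConnectedComponent // K ∉ T} = (Tᶜ).ncard := by
    rw [← Nat.card_coe_set_eq]
    rfl
  have h3 : T.ncard + (Tᶜ).ncard = Nat.card H.ConnectedComponent :=
    Set.ncard_add_ncard_compl T (Set.toFinite _) (Set.toFinite _)
  have : cnt H' = (Tᶜ).ncard + 1 := by
    rw [cnt, ← hcard, h1, h2]
  rw [this, cnt]
  omega

private lemma touch_card_mono [Fintype V] {H H' : SimpleGraph V} (h : H ≤ H') (v : V) (S : Set V) :
    (touchSet H' v S).ncard ≤ (touchSet H v S).ncard := by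
  classical
  let f : H.ConnectedComponent → H'.ConnectedComponent :=
    ConnectedComponent.map (Hom.ofLE h)
  have hsub : touchSet H' v S ⊆ f '' touchSet H v S := by
    rintro K ⟨u, hu, rfl⟩
    exact ⟨H.connectedComponentMk u, ⟨u, hu, rfl⟩, rfl⟩
  calc (touchSet H' v S).ncard ≤ (f '' touchSet H v S).ncard :=
        Set.ncard_le_ncard hsub (Set.toFinite _)
    _ ≤ (touchSet H v S).ncard := Set.ncard_image_le (Set.toFinite _)

private lemma touch_card_le_insert [Fintype V] {H : SimpleGraph V} {v : V} {S S' : Set V} {w : V}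
    (hS : S ⊆ S') (hw : ∀ x ∈ S' \ S, H.Reachable w x) :
    (touchSet H v S').ncard ≤ (touchSet H v S).ncard + 1 := by
  classical
  have hsub : touchSet H v S' ⊆ touchSet H v S ∪ {H.connectedComponentMk w} := by
    rintro K ⟨u, hu, rfl⟩
    rcases hu with rfl | hu
    · exact Or.inl ⟨u, mem_insert _ _, rfl⟩
    · by_cases h : u ∈ S
      · exact Or.inl ⟨u, mem_insert_of_mem _ h, rfl⟩
      · exact Or.inr (by simpa using (ConnectedComponent.sound (hw u ⟨hu, h⟩)).symm)
  calc (touchSet H v S').ncard ≤ _ := Set.ncard_le_ncard hsub (Set.toFinite _)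
    _ ≤ (touchSet H v S).ncard + ({H.connectedComponentMk w} : Set _).ncard :=
        Set.ncard_union_le _ _
    _ = (touchSet H v S).ncard + 1 := by rw [Set.ncard_singleton]

private lemma spanSub_insert (G : SimpleGraph V) (v : V) (C : Set V) :
    spanSub G (insert v C) = spanSub G C ⊔ starG v (G.neighborSet v) := by
  ext a b
  simp only [spanSub, sup_adj, starG, mem_insert_iff, mem_neighborSet]
  constructor
  · rintro ⟨hab, (rfl | ha) | (rfl | hb)⟩
    · exact Or.inr (Or.inl ⟨rfl, hab, hab.ne'⟩)
    · exact Or.inl ⟨hab, Or.inl ha⟩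
    · exact Or.inr (Or.inr ⟨rfl, hab.symm, hab.ne⟩)
    · exact Or.inl ⟨hab, Or.inr hb⟩
  · rintro (⟨hab, h⟩ | ⟨rfl, hb, _⟩ | ⟨rfl, ha, _⟩)
    · exact ⟨hab, h.imp Or.inr Or.inr⟩
    · exact ⟨hb, Or.inl (Or.inl rfl)⟩
    · exact ⟨ha.symm, Or.inr (Or.inl rfl)⟩

private lemma bothG_insert (G : SimpleGraph V) (v : V) (C : Set V) :
    bothG G (insert v C) = bothG G C ⊔ starG v (C ∩ G.neighborSet v) := by
  ext a b
  simp only [bothG, sup_adj, starG, mem_insert_iff, mem_inter_iff, mem_neighborSet]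
  constructor
  · rintro ⟨hab, (rfl | ha), (rfl | hb)⟩
    · exact absurd rfl hab.ne
    · exact Or.inr (Or.inl ⟨rfl, ⟨hb, hab⟩, hab.ne'⟩)
    · exact Or.inr (Or.inr ⟨rfl, ⟨ha, hab.symm⟩, hab.ne⟩)
    · exact Or.inl ⟨hab, ha, hb⟩
  · rintro (⟨hab, ha, hb⟩ | ⟨rfl, ⟨hb, hadj⟩, _⟩ | ⟨rfl, ⟨ha, hadj⟩, _⟩)
    · exact ⟨hab, Or.inr ha, Or.inr hb⟩
    · exact ⟨hadj, Or.inl rfl, Or.inr hb⟩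
    · exact ⟨hadj.symm, Or.inr ha, Or.inl rfl⟩

private lemma cnt_eq_one_of_connected {H : SimpleGraph V} (h : H.Connected) :
    cnt H = 1 := by
  have hne : Nonempty H.ConnectedComponent := by
    obtain ⟨v⟩  := h.nonempty
    exact ⟨H.connectedComponentMk v⟩
  rw [cnt, Nat.card_eq_one_iff_unique]
  exact ⟨h.preconnected.subsingleton_connectedComponent, hne⟩

private def bothHom (G : SimpleGraph V) (C : Set V) : G.induce C →g bothG G C where
  toFun x := x.1
  map_rel' := fun {x y} h => ⟨h, x.2, y.2⟩

private lemma bothG_reach {G : SimpleGraph V} {C : Set V} {a b : V}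
    (h : (bothG G C).Reachable a b) :
    a = b ∨ ∃ (ha : a ∈ C) (hb : b ∈ C), (G.induce C).Reachable ⟨a, ha⟩ ⟨b, hb⟩ := by
  obtain ⟨w⟩ := h
  induction w with
  | nil => exact Or.inl rfl
  | @cons x y z h p ih =>
    obtain ⟨hxy, hx, hy⟩ := h
    have step : (G.induce C).Adj ⟨x, hx⟩ ⟨y, hy⟩ := hxy
    rcases ih with rfl | ⟨hy', hz, hr⟩
    · exact Or.inr ⟨hx, hy, step.reachable⟩
    · exact Or.inr ⟨hx, hz, step.reachable.trans hr⟩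

private lemma cnt_bothG [Fintype V] (G : SimpleGraph V) (C : Set V) :
    cnt (bothG G C) = pcomp G C + Nat.card ↥(Cᶜ) := by
  classical
  let F : (G.induce C).ConnectedComponent ⊕ ↥(Cᶜ) → (bothG G C).ConnectedComponent :=
    Sum.elim (ConnectedComponent.map (bothHom G C))
      (fun w => (bothG G C).connectedComponentMk w.1)
  have hbij : Function.Bijective F := by
    constructor
    · rintro (K1 | ⟨w1, hw1⟩) (K2 | ⟨w2, hw2⟩) h
      · obtain ⟨⟨x, hx⟩, rfl⟩ := K1.exists_rep
        obtain ⟨⟨y, hy⟩, rfl⟩ := K2.exists_rep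
        have hr := bothG_reach (ConnectedComponent.exact h)
        rcases hr with rfl | ⟨ha, hb, hr⟩
        · refine congrArg Sum.inl ?_
          exact ConnectedComponent.sound (Reachable.refl _)
        · refine congrArg Sum.inl ?_
          exact ConnectedComponent.sound hr
      · obtain ⟨⟨x, hx⟩, rfl⟩ := K1.exists_rep
        have hr := bothG_reach (ConnectedComponent.exact h)
        rcases hr with rfl | ⟨ha, hb, _⟩
        · exact absurd hx hw2
        · exact absurd hb hw2
      · obtain ⟨⟨y, hy⟩, rfl⟩ := K2.exists_rep
        have hr := bothG_reach (ConnectedComponent.exact h)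
        rcases hr with rfl | ⟨ha, hb, _⟩
        · exact absurd hy hw1
        · exact absurd ha hw1
      · have hr := bothG_reach (ConnectedComponent.exact h)
        rcases hr with h' | ⟨ha, hb, _⟩
        · simp only [Sum.inr.injEq, Subtype.mk.injEq]
          exact h'
        · exact absurd ha hw1
    · intro K
      obtain ⟨a, rfl⟩ := K.exists_rep
      by_cases ha : a ∈ C
      · exact ⟨Sum.inl ((G.induce C).connectedComponentMk ⟨a, ha⟩), rfl⟩
      · exact ⟨Sum.inr ⟨a, ha⟩, rfl⟩
  have := Nat.card_congr (Equiv.ofBijective _ hbij)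
  rw [cnt, ← this, Nat.card_sum, pcomp]

private lemma bothG_mono (G : SimpleGraph V) {C D : Set V} (h : C ⊆ D) :
    bothG G C ≤ bothG G D := fun _ _ hadj => ⟨hadj.1, h hadj.2.1, h hadj.2.2⟩

private lemma spanSub_mono (G : SimpleGraph V) {C D : Set V} (h : C ⊆ D) :
    spanSub G C ≤ spanSub G D := fun _ _ hadj => ⟨hadj.1, hadj.2.imp (@h _) (@h _)⟩

private lemma boundary_aux {α : Type*} {H : SimpleGraph α} {P : Set α} :
    ∀ {a b : α}, H.Walk a b → a ∈ P → b ∉ P → ∃ x ∈ P, ∃ y, y ∉ P ∧ H.Adj x y := by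
  intro a b w
  induction w with
  | nil => intro ha hb; exact absurd ha hb
  | @cons x y z h p ih =>
    intro ha hb
    by_cases hy : y ∈ P
    · exact ih hy hb
    · exact ⟨x, ha, y, hy, h⟩

/-- From a connected dominating set, find a new vertex adjacent to a nonempty proper `Q`. -/
private lemma exists_adj_outside (G : SimpleGraph V) {Cs Q : Set V}
    (hconn : (G.induce Cs).Connected) (hQCs : Q ⊆ Cs) (hQ : Q.Nonempty)
    {b : V} (hbCs : b ∈ Cs) (hbQ : b ∉ Q) :
    ∃ u, u ∈ Cs ∧ u ∉ Q ∧ ∃ p ∈ Q, G.Adj u p := by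
  obtain ⟨a, haQ⟩ := hQ
  have haCs : a ∈ Cs := hQCs haQ
  have hreach := hconn.preconnected ⟨a, haCs⟩ ⟨b, hbCs⟩
  obtain ⟨w⟩ := hreach
  obtain ⟨x, hx, y, hy, hadj⟩ :=
    boundary_aux (P := {z : ↥Cs | z.1 ∈ Q}) w haQ hbQ
  exact ⟨y.1, y.2, hy, x.1, hx, (hadj : G.Adj x.1 y.1).symm⟩

private lemma induce_union_connected (G : SimpleGraph V) {C Cs : Set V}
    (hCs : IsCDS G Cs) : (G.induce (C ∪ Cs)).Connected := by
  obtain ⟨hdom, hconn⟩ := hCs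
  have hne : Nonempty ↥(C ∪ Cs) := by
    obtain ⟨⟨u, hu⟩⟩ := hconn.nonempty
    exact ⟨⟨u, Or.inr hu⟩⟩
  rw [connected_iff]
  refine ⟨?_, hne⟩
  -- every vertex reaches some vertex of Cs
  have key : ∀ x : ↥(C ∪ Cs), ∃ (u : V) (hu : u ∈ Cs),
      (G.induce (C ∪ Cs)).Reachable x ⟨u, Or.inr hu⟩ := by
    rintro ⟨x, hx⟩
    by_cases hxCs : x ∈ Cs
    · exact ⟨x, hxCs, Reachable.refl _⟩
    · obtain ⟨u, hu, hadj⟩ := hdom x hxCs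
      exact ⟨u, hu, (Adj.reachable (by exact hadj : (G.induce (C ∪ Cs)).Adj ⟨x, hx⟩ ⟨u, Or.inr hu⟩))⟩
  have keyCs : ∀ (u u' : V) (hu : u ∈ Cs) (hu' : u' ∈ Cs),
      (G.induce (C ∪ Cs)).Reachable ⟨u, Or.inr hu⟩ ⟨u', Or.inr hu'⟩ := by
    intro u u' hu hu'
    have := hconn.preconnected ⟨u, hu⟩ ⟨u', hu'⟩
    have hmap := Reachable.map ((G.induceHomOfLE (by exact subset_union_right :
        Cs ≤ C ∪ Cs)).toHom) this
    exact hmap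
  intro x y
  obtain ⟨u, hu, hxu⟩ := key x
  obtain ⟨u', hu', hyu⟩ := key y
  exact (hxu.trans (keyCs u u' hu hu')).trans hyu.symm

private lemma spanSub_union_connected (G : SimpleGraph V) (hG : G.Connected) {C Cs : Set V}
    (hCs : IsCDS G Cs) : (spanSub G (C ∪ Cs)).Connected := by
  obtain ⟨hdom, hconn⟩ := hCs
  rw [connected_iff]
  refine ⟨?_, ⟨hG.nonempty.some⟩⟩
  have key : ∀ x : V, ∃ u ∈ Cs, (spanSub G (C ∪ Cs)).Reachable x u := by
    intro x
    by_cases hxCs : x ∈ Cs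
    · exact ⟨x, hxCs, Reachable.refl _⟩
    · obtain ⟨u, hu, hadj⟩ := hdom x hxCs
      exact ⟨u, hu, Adj.reachable ⟨hadj, Or.inr (Or.inr hu)⟩⟩
  let hom : G.induce Cs →g spanSub G (C ∪ Cs) :=
    ⟨fun z => z.1, fun {z z'} h => ⟨h, Or.inl (Or.inr z.2)⟩⟩
  have keyCs : ∀ u u' : V, u ∈ Cs → u' ∈ Cs → (spanSub G (C ∪ Cs)).Reachable u u' := by
    intro u u' hu hu'
    have := hconn.preconnected ⟨u, hu⟩ ⟨u', hu'⟩
    exact Reachable.map hom this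
  intro x y
  obtain ⟨u, hu, hxu⟩ := key x
  obtain ⟨u', hu', hyu⟩ := key y
  exact (hxu.trans (keyCs u u' hu hu')).trans hyu.symm

private lemma f1_union_cds (G : SimpleGraph V) (hG : G.Connected) {C Cs : Set V}
    (hCs : IsCDS G Cs) : f1 G (C ∪ Cs) = 2 := by
  have h1 : pcomp G (C ∪ Cs) = 1 := cnt_eq_one_of_connected (induce_union_connected G hCs)
  have h2 : qcomp G (C ∪ Cs) = 1 := cnt_eq_one_of_connected (spanSub_union_connected G hG hCs)
  rw [f1, h1, h2]

private noncomputable def gpot (G : SimpleGraph V) (D : Set V) : ℕ :=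
  cnt (bothG G D) + cnt (spanSub G D)

private lemma gpot_insert_le [Fintype V] (G : SimpleGraph V) (D : Set V) (u : V) :
    gpot G (insert u D) ≤ gpot G D := by
  have h1 := star_count (bothG G D) u (D ∩ G.neighborSet u)
  have h2 := star_count (spanSub G D) u (G.neighborSet u)
  rw [← bothG_insert] at h1
  rw [← spanSub_insert] at h2
  have p1 : 0 < (touchSet (bothG G D) u (D ∩ G.neighborSet u)).ncard :=
    (Set.ncard_pos (Set.toFinite _)).mpr ⟨_, touch_nonempty⟩
  have p2 : 0 < (touchSet (spanSub G D) u (G.neighborSet u)).ncard :=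
    (Set.ncard_pos (Set.toFinite _)).mpr ⟨_, touch_nonempty⟩
  rw [gpot, gpot]
  omega

private lemma step_ineq [Fintype V] (G : SimpleGraph V) {C Q : Set V} {u w : V}
    (huC : u ∉ C) (hw : ∀ x ∈ Q, (bothG G (C ∪ Q)).Reachable w x) :
    gpot G (C ∪ Q) + gpot G (insert u C)
      ≤ gpot G (insert u (C ∪ Q)) + gpot G C + 1 := by
  set D := C ∪ Q with hD
  have e1 := star_count (spanSub G D) u (G.neighborSet u)
  rw [← spanSub_insert] at e1
  have e2 := star_count (spanSub G C) u (G.neighborSet u)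
  rw [← spanSub_insert] at e2
  have f1' := star_count (bothG G D) u (D ∩ G.neighborSet u)
  rw [← bothG_insert] at f1'
  have f2 := star_count (bothG G C) u (C ∩ G.neighborSet u)
  rw [← bothG_insert] at f2
  have m1 : (touchSet (spanSub G D) u (G.neighborSet u)).ncard
      ≤ (touchSet (spanSub G C) u (G.neighborSet u)).ncard :=
    touch_card_mono (spanSub_mono G subset_union_left) _ _
  have m2 : (touchSet (bothG G D) u (D ∩ G.neighborSet u)).ncard
      ≤ (touchSet (bothG G D) u (C ∩ G.neighborSet u)).ncard + 1 := by
    refine touch_card_le_insert (w := w) (inter_subset_inter_left _ subset_union_left) ?_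
    rintro x ⟨⟨hxD, hxN⟩, hx⟩
    have hxQ : x ∈ Q := by
      rcases hxD with hxC | hxQ
      · exact absurd ⟨hxC, hxN⟩ hx
      · exact hxQ
    exact hw x hxQ
  have m3 : (touchSet (bothG G D) u (C ∩ G.neighborSet u)).ncard
      ≤ (touchSet (bothG G C) u (C ∩ G.neighborSet u)).ncard :=
    touch_card_mono (bothG_mono G subset_union_left) _ _
  simp only [gpot]
  omega

private lemma chain_ineq [Fintype V] (G : SimpleGraph V) {C Cs : Set V}
    (hCs : IsCDS G Cs) (K : ℕ)
    (hK : ∀ v ∈ Cs \ C, gpot G C ≤ gpot G (insert v C) + K) :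
    ∀ (n : ℕ) (Q : Set V), (Cs \ Q).ncard = n → Q ⊆ Cs →
      (∃ w, ∀ x ∈ Q, (bothG G (C ∪ Q)).Reachable w x) →
      gpot G (C ∪ Q) ≤ gpot G (C ∪ Cs) + ((Cs \ C) \ Q).ncard * (K + 1) := by
  intro n
  induction n with
  | zero =>
    intro Q hQn hQCs _
    have hQ : Q = Cs := by
      have : Cs \ Q = ∅ := (Set.ncard_eq_zero (Set.toFinite _)).mp hQn
      have hsub : Cs ⊆ Q := by
        intro x hx
        by_contra hxQ
        exact absurd (Set.mem_diff_of_mem hx hxQ) (by simp [this])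
      exact Subset.antisymm hQCs hsub
    subst hQ
    exact Nat.le_add_right _ _
  | succ n ih =>
    intro Q hQn hQCs hwit
    have hne : (Cs \ Q).Nonempty := Set.nonempty_of_ncard_ne_zero (by omega)
    -- choose u
    have hchoice : ∃ u, u ∈ Cs ∧ u ∉ Q ∧ (Q = ∅ ∨ ∃ p ∈ Q, G.Adj u p) := by
      rcases Set.eq_empty_or_nonempty Q with rfl | hQne
      · obtain ⟨u, hu⟩ := hne
        exact ⟨u, hu.1, hu.2, Or.inl rfl⟩
      · obtain ⟨b, hb⟩ := hne
        obtain ⟨u, hu1, hu2, hp⟩ := exists_adj_outside G hCs.2 hQCs hQne hb.1 hb.2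
        exact ⟨u, hu1, hu2, Or.inr hp⟩
    obtain ⟨u, huCs, huQ, hadj⟩ := hchoice
    set Q' := insert u Q with hQ'
    have hQ'Cs : Q' ⊆ Cs := insert_subset huCs hQCs
    have hunion : C ∪ Q' = insert u (C ∪ Q) := Set.union_insert
    have hQ'n : (Cs \ Q').ncard = n := by
      have : Cs \ Q' = (Cs \ Q) \ {u} := by
        ext x; simp [hQ', and_comm]; tauto
      rw [this]
      have := Set.ncard_diff_singleton_add_one (Set.mem_diff_of_mem huCs huQ)
        (Set.toFinite _)
      omega
    -- new witness
    have hwit' : ∃ w', ∀ x ∈ Q', (bothG G (C ∪ Q')).Reachable w' x := by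
      refine ⟨u, ?_⟩
      intro x hx
      rcases hx with rfl | hxQ
      · exact Reachable.refl _
      · obtain ⟨w, hw⟩ := hwit
        rcases hadj with rfl | ⟨p, hp, hup⟩
        · exact absurd hxQ (Set.notMem_empty x)
        · have hmono : bothG G (C ∪ Q) ≤ bothG G (C ∪ Q') :=
            bothG_mono G (by rw [hQ']; exact union_subset_union_right _ (subset_insert _ _))
          have h1 : (bothG G (C ∪ Q')).Reachable u p :=
            Adj.reachable ⟨hup, by simp [hQ'], Or.inr (mem_insert_of_mem _ hp)⟩
          exact h1.trans (((hw p hp).mono hmono).symm.trans ((hw x hxQ).mono hmono))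
    by_cases huC : u ∈ C
    · have hCQ' : C ∪ Q' = C ∪ Q := by
        rw [hunion]
        exact Set.insert_eq_of_mem (Set.mem_union_left _ huC)
      have hdiff : (Cs \ C) \ Q' = (Cs \ C) \ Q := by
        ext x
        simp only [Set.mem_diff, hQ', Set.mem_insert_iff, not_or]
        constructor
        · rintro ⟨hx, _, hq⟩; exact ⟨hx, hq⟩
        · rintro ⟨⟨hxCs, hxC⟩, hq⟩
          exact ⟨⟨hxCs, hxC⟩, fun h => hxC (h ▸ huC), hq⟩
      have := ih Q' hQ'n hQ'Cs (by rwa [hCQ'] at hwit' ⊢)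
      rwa [hCQ', hdiff] at this
    · -- real step
      have hstep := step_ineq G (Q := Q) (u := u) (w := hwit.choose) huC hwit.choose_spec
      have hKu := hK u ⟨huCs, huC⟩
      have ihQ' := ih Q' hQ'n hQ'Cs hwit'
      rw [hunion] at ihQ'
      have hdiff : ((Cs \ C) \ Q).ncard = ((Cs \ C) \ Q').ncard + 1 := by
        have heq : (Cs \ C) \ Q' = ((Cs \ C) \ Q) \ {u} := by
          ext x; simp [hQ']; tauto
        rw [heq]
        have := Set.ncard_diff_singleton_add_one
          (show u ∈ (Cs \ C) \ Q from ⟨⟨huCs, huC⟩, huQ⟩) (Set.toFinite _)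
        omega
      rw [hdiff]
      have hmul : (((Cs \ C) \ Q').ncard + 1) * (K + 1)
          = ((Cs \ C) \ Q').ncard * (K + 1) + (K + 1) := by ring
      have hins := gpot_insert_le G C u
      omega

theorem exists_opt_vertex_large_decrease [Fintype V] (G : SimpleGraph V) (hG : G.Connected)
    (C : Set V) (hC : 2 < f1 G C)
    (m : ℕ) (Cs : Set V) (hCs : IsCDS G Cs) (hCsm : Cs.ncard = m)
    (hmin : ∀ D : Set V, IsCDS G D → m ≤ D.ncard) :
    ∃ v ∈ Cs, ((f1 G C : ℝ) - 2) / m ≤ (f1 G C : ℝ) - f1 G (insert v C) + 1 := by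
  classical
  have hg : ∀ D : Set V, gpot G D = f1 G D + (Dᶜ).ncard := by
    intro D
    have h1 : cnt (bothG G D) = pcomp G D + (Dᶜ).ncard := by
      rw [cnt_bothG, Nat.card_coe_set_eq]
    have h2 : cnt (spanSub G D) = qcomp G D := rfl
    rw [gpot, h1, h2, f1]
    omega
  have hUnion2 : f1 G (C ∪ Cs) = 2 := f1_union_cds G hG hCs
  have hCsC : (Cs \ C).Nonempty := by
    rcases Set.eq_empty_or_nonempty (Cs \ C) with h | h
    · exfalso
      have hsub : Cs ⊆ C := by
        intro x hx
        by_contra hxC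
        have hmem : x ∈ Cs \ C := ⟨hx, hxC⟩
        rw [h] at hmem
        exact hmem
      have heq : C ∪ Cs = C := union_eq_self_of_subset_right hsub
      rw [heq] at hUnion2
      omega
    · exact h
  obtain ⟨v, hv, hvmax⟩ := Set.exists_max_image (Cs \ C)
    (fun u => gpot G C - gpot G (insert u C)) (Set.toFinite _) hCsC
  set K := gpot G C - gpot G (insert v C) with hKdef
  have hK : ∀ u ∈ Cs \ C, gpot G C ≤ gpot G (insert u C) + K := by
    intro u hu
    have h := hvmax u hu
    omega
  have hwit0 : ∃ w, ∀ x ∈ (∅ : Set V), (bothG G (C ∪ ∅)).Reachable w x :=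
    ⟨hG.nonempty.some, fun x hx => absurd hx (Set.notMem_empty x)⟩
  have hchain := chain_ineq G hCs K hK (Cs \ ∅).ncard ∅ rfl (empty_subset _) hwit0
  rw [Set.union_empty, Set.diff_empty] at hchain
  set k := (Cs \ C).ncard with hk
  have hkm : k ≤ m := by
    rw [← hCsm]
    exact Set.ncard_le_ncard diff_subset (Set.toFinite _)
  have hk1 : 0 < k := (Set.ncard_pos (Set.toFinite _)).mpr hCsC
  have hcompl : (Cᶜ).ncard = ((C ∪ Cs)ᶜ).ncard + k := by
    have hdisj : Disjoint ((C ∪ Cs)ᶜ) (Cs \ C) := by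
      rw [Set.disjoint_left]
      rintro x hx ⟨hxCs, _⟩
      exact hx (Or.inr hxCs)
    have hsplit : Cᶜ = ((C ∪ Cs)ᶜ) ∪ (Cs \ C) := by
      ext x
      simp only [Set.mem_compl_iff, Set.mem_union, Set.mem_diff, not_or]
      tauto
    rw [hk, hsplit, Set.ncard_union_eq hdisj (Set.toFinite _) (Set.toFinite _)]
  have hgC := hg C
  have hgU := hg (C ∪ Cs)
  rw [hUnion2] at hgU
  have hmul : k * (K + 1) = k * K + k := by ring
  have hmain : f1 G C ≤ 2 + k * K := by omega
  have hvC : v ∉ C := hv.2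
  have hginsle := gpot_insert_le G C v
  have hgIns := hg (insert v C)
  have hcomplv : (Cᶜ).ncard = ((insert v C)ᶜ).ncard + 1 := by
    have heq : (insert v C)ᶜ = Cᶜ \ {v} := by
      ext x
      simp only [Set.mem_compl_iff, Set.mem_insert_iff, Set.mem_diff,
        Set.mem_singleton_iff, not_or]
      tauto
    rw [heq]
    have := Set.ncard_diff_singleton_add_one (show v ∈ Cᶜ from hvC) (Set.toFinite _)
    omega
  refine ⟨v, hv.1, ?_⟩
  have hNat : K + f1 G (insert v C) = f1 G C + 1 := by omega
  have hKreal : (K : ℝ) = (f1 G C : ℝ) - f1 G (insert v C) + 1 := by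
    have := congrArg (fun n : ℕ => (n : ℝ)) hNat
    push_cast at this
    linarith
  have hm0 : 0 < m := lt_of_lt_of_le hk1 hkm
  have hNat2 : f1 G C ≤ 2 + m * K := by
    have hmk : k * K ≤ m * K := Nat.mul_le_mul_right _ hkm
    omega
  rw [← hKreal, div_le_iff₀ (by exact_mod_cast hm0 : (0:ℝ) < m)]
  have hcast := (Nat.cast_le (α := ℝ)).mpr hNat2
  push_cast at hcast
  nlinarith [hcast, (Nat.cast_nonneg (α := ℝ) K), (Nat.cast_nonneg (α := ℝ) m)]
end

section
/- Let G be a connected graph with n vertices, maximum degree Δ, and minimum CDS size m with n ≥ 2m + 2. If a vertex subset C satisfies p(C) + q(C) ≤ (n − 2 − m)(1 − 1/m)^{|C|} + m + 2 and p(C) + q(C) ≥ 2m + 2, then |C| ≤ m · ln Δ. -/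
open SimpleGraph Set

variable {V : Type*}

lemma card_le_ncard_mul_maxDegree_add_one [Fintype V] [DecidableEq V]
    (G : SimpleGraph V) [DecidableRel G.Adj] (Cs : Set V) (hd : IsDomSet G Cs) :
    Fintype.card V ≤ Cs.ncard * (G.maxDegree + 1) := by
  classical
  have hsub : (Finset.univ : Finset V) ⊆
      Cs.toFinset.biUnion (fun u => insert u (G.neighborFinset u)) := by
    intro v _
    simp only [Finset.mem_biUnion, Set.mem_toFinset, Finset.mem_insert,
      SimpleGraph.mem_neighborFinset]
    by_cases hv : v ∈ Cs
    · exact ⟨v, hv, Or.inl rfl⟩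
    · obtain ⟨u, hu, ha⟩ := hd v hv
      exact ⟨u, hu, Or.inr ha.symm⟩
  calc Fintype.card V ≤ (Cs.toFinset.biUnion (fun u => insert u (G.neighborFinset u))).card :=
        Finset.card_le_card hsub
    _ ≤ ∑ u ∈ Cs.toFinset, (insert u (G.neighborFinset u)).card := Finset.card_biUnion_le
    _ ≤ ∑ _u ∈ Cs.toFinset, (G.maxDegree + 1) := by
        refine Finset.sum_le_sum (fun u _ => ?_)
        calc (insert u (G.neighborFinset u)).card ≤ (G.neighborFinset u).card + 1 :=
              Finset.card_insert_le _ _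
          _ ≤ G.maxDegree + 1 := Nat.add_le_add_right (G.degree_le_maxDegree u) 1
    _ = Cs.ncard * (G.maxDegree + 1) := by
        rw [Finset.sum_const, smul_eq_mul, Set.ncard_eq_toFinset_card']

theorem good_individual_size_bound [Fintype V] [DecidableEq V] (G : SimpleGraph V)
    [DecidableRel G.Adj] (hG : G.Connected)
    (m : ℕ) (hm : 1 ≤ m)
    (Cs : Set V) (hCs : IsCDS G Cs) (hCsm : Cs.ncard = m)
    (hmin : ∀ S : Set V, IsCDS G S → m ≤ S.ncard)
    (hDelta : 2 ≤ G.maxDegree)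
    (hn : 2 * m + 2 ≤ Fintype.card V)
    (C : Set V)
    (hgood : (f1 G C : ℝ) ≤
      ((Fintype.card V : ℝ) - 2 - m) * (1 - 1 / m) ^ C.ncard + m + 2)
    (hbig : 2 * m + 2 ≤ f1 G C) :
    (C.ncard : ℝ) ≤ m * Real.log (G.maxDegree) := by
  have hm' : (1:ℝ) ≤ (m:ℝ) := by exact_mod_cast hm
  have hmpos : (0:ℝ) < (m:ℝ) := by linarith
  have hD : (2:ℝ) ≤ (G.maxDegree:ℝ) := by exact_mod_cast hDelta
  have hn' : 2*(m:ℝ)+2 ≤ (Fintype.card V:ℝ) := by exact_mod_cast hn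
  have hcard0 := card_le_ncard_mul_maxDegree_add_one G Cs hCs.1
  rw [hCsm] at hcard0
  have hcard : (Fintype.card V:ℝ) ≤ (m:ℝ) * ((G.maxDegree:ℝ) + 1) := by
    exact_mod_cast hcard0
  have hbig' : 2*(m:ℝ)+2 ≤ (f1 G C : ℝ) := by exact_mod_cast hbig
  have h1 : (m:ℝ) ≤ ((Fintype.card V:ℝ) - 2 - m) * (1 - 1/m) ^ C.ncard := by linarith
  have hbase : (0:ℝ) ≤ 1 - 1/(m:ℝ) := by
    have : 1/(m:ℝ) ≤ 1 := by rw [div_le_one hmpos]; exact hm'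
    linarith
  have hexp : (1 - 1/(m:ℝ)) ≤ Real.exp (-(1/(m:ℝ))) := by
    have := Real.add_one_le_exp (-(1/(m:ℝ)))
    linarith
  have hpow : (1 - 1/(m:ℝ)) ^ C.ncard ≤ Real.exp (-((C.ncard:ℝ)/m)) := by
    calc (1 - 1/(m:ℝ)) ^ C.ncard ≤ (Real.exp (-(1/(m:ℝ)))) ^ C.ncard :=
          pow_le_pow_left₀ hbase hexp _
      _ = Real.exp (-((C.ncard:ℝ)/m)) := by
          rw [← Real.exp_nat_mul]; congr 1; ring
  have hcoef : ((Fintype.card V:ℝ) - 2 - m) ≤ (m:ℝ) * (G.maxDegree:ℝ) := by nlinarith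
  have hcoefnn : (0:ℝ) ≤ (Fintype.card V:ℝ) - 2 - m := by linarith
  have h2 : (m:ℝ) ≤ (m:ℝ) * (G.maxDegree:ℝ) * Real.exp (-((C.ncard:ℝ)/m)) :=
    le_trans h1 (mul_le_mul hcoef hpow (pow_nonneg hbase _) (by positivity))
  have h5 := mul_le_mul_of_nonneg_right h2 (Real.exp_pos ((C.ncard:ℝ)/m)).le
  rw [mul_assoc, ← Real.exp_add, neg_add_cancel, Real.exp_zero, mul_one] at h5
  have h4 : Real.exp ((C.ncard:ℝ)/m) ≤ (G.maxDegree:ℝ) :=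
    (mul_le_mul_iff_right₀ hmpos).mp h5
  have h6 : (C.ncard:ℝ)/m ≤ Real.log (G.maxDegree:ℝ) :=
    (Real.le_log_iff_exp_le (by linarith)).mpr h4
  rw [div_le_iff₀ hmpos] at h6
  linarith
end
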